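/- In the flower game with k petals, every winning strategy for Eve uses at least 2^k − 1 memory states: given any strategy σ for Eve with memory structure of size less than 2^k − 1, Adam has a counter-strategy such that the resulting play violates the generalized reachability objective. -/
import Mathlib


/-- An arena: a directed graph with every vertex having a successor,
and a partition of vertices between Eve (`eve v`) and Adam (`¬ eve v`). -/
structure Arena (V : Type) where
  E : V → V → Prop
  eve : V → Prop
  succ_exists : ∀ v, ∃ w, E v w

variable {V M : Type}

/-- A play from `v0`: an infinite path starting at `v0`. -/
def IsPlay (A : Arena V) (v0 : V) (π : ℕ → V) : Prop :=
  π 0 = v0 ∧ ∀ n, A.E (π n) (π (n + 1))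

/-- The finite history of a play up to time `n` (inclusive). -/
def hist (π : ℕ → V) (n : ℕ) : List V :=
  List.ofFn (fun i : Fin (n + 1) => π i)

/-- A strategy (a function from histories to vertices) is legal if it always moves along edges. -/
def Legal (A : Arena V) (σ : List V → V) : Prop :=
  ∀ (l : List V) (v : V), A.E v (σ (l ++ [v]))

/-- A play is consistent with Eve's strategy `σ`. -/
def ConsistentEve (A : Arena V) (σ : List V → V) (π : ℕ → V) : Prop :=
  ∀ n, A.eve (π n) → π (n + 1) = σ (hist π n)

/-- A play is consistent with Adam's strategy `τ`. -/
def ConsistentAdam (A : Arena V) (τ : List V → V) (π : ℕ → V) : Prop :=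
  ∀ n, ¬ A.eve (π n) → π (n + 1) = τ (hist π n)

/-- The generalized reachability objective: visit each `F i` at least once. -/
def GenReach {k : ℕ} (F : Fin k → Set V) (π : ℕ → V) : Prop :=
  ∀ i, ∃ n, π n ∈ F i

/-- Eve wins the generalized reachability game from `v0`. -/
def EveWinsGenReach {k : ℕ} (A : Arena V) (F : Fin k → Set V) (v0 : V) : Prop :=
  ∃ σ, Legal A σ ∧ ∀ π, IsPlay A v0 π → ConsistentEve A σ π → GenReach F π

/-- Adam wins the generalized reachability game from `v0`. -/
def AdamWinsGenReach {k : ℕ} (A : Arena V) (F : Fin k → Set V) (v0 : V) : Prop :=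
  ∃ τ, Legal A τ ∧ ∀ π, IsPlay A v0 π → ConsistentAdam A τ π → ¬ GenReach F π

/-- One step of the attractor computation. -/
def AttrStep (A : Arena V) (X : Set V) : Set V :=
  X ∪ {u | A.eve u ∧ ∃ v, A.E u v ∧ v ∈ X} ∪ {u | ¬ A.eve u ∧ ∀ v, A.E u v → v ∈ X}

/-- The attractor sequence `Attr_i(F)`. -/
def AttrSeq (A : Arena V) (F : Set V) : ℕ → Set V
  | 0 => F
  | n + 1 => AttrStep A (AttrSeq A F n)

/-- The attractor `Attr(F)`: union of the attractor sequence. -/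
def Attr (A : Arena V) (F : Set V) : Set V := ⋃ n, AttrSeq A F n

/-- A memory structure: initial memory state and update function on edges. -/
structure MemStruct (V M : Type) where
  m0 : M
  upd : M → V → V → M

/-- The sequence of memory states along a play. -/
def memTrace (μ : MemStruct V M) (π : ℕ → V) : ℕ → M
  | 0 => μ.m0
  | n + 1 => μ.upd (memTrace μ π n) (π n) (π (n + 1))

/-- A next-move function is legal if it always moves along edges. -/
def MemLegal (A : Arena V) (ν : V → M → V) : Prop :=
  ∀ v m, A.E v (ν v m)

/-- Consistency of a play with Eve's finite-memory strategy `(μ, ν)`. -/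
def MemConsistentEve (A : Arena V) (μ : MemStruct V M) (ν : V → M → V) (π : ℕ → V) : Prop :=
  ∀ n, A.eve (π n) → π (n + 1) = ν (π n) (memTrace μ π n)

/-- Consistency of a play with Adam's finite-memory strategy `(μ, ν)`. -/
def MemConsistentAdam (A : Arena V) (μ : MemStruct V M) (ν : V → M → V) (π : ℕ → V) : Prop :=
  ∀ n, ¬ A.eve (π n) → π (n + 1) = ν (π n) (memTrace μ π n)

/-- Eve wins with the finite-memory strategy `(μ, ν)` from `v0`. -/
def EveWinsWithMem {k : ℕ} (A : Arena V) (F : Fin k → Set V) (v0 : V)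
    (μ : MemStruct V M) (ν : V → M → V) : Prop :=
  MemLegal A ν ∧ ∀ π, IsPlay A v0 π → MemConsistentEve A μ ν π → GenReach F π

/-- Adam wins with the finite-memory strategy `(μ, ν)` from `v0`. -/
def AdamWinsWithMem {k : ℕ} (A : Arena V) (F : Fin k → Set V) (v0 : V)
    (μ : MemStruct V M) (ν : V → M → V) : Prop :=
  MemLegal A ν ∧ ∀ π, IsPlay A v0 π → MemConsistentAdam A μ ν π → ¬ GenReach F π


/-- The flower arena's vertices: the heart, the petals `v_i`, the return vertices `b_i`
and the sinks `c_i`. -/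
inductive Flower (k : ℕ)
  | heart
  | petal (i : Fin k)
  | back (i : Fin k)
  | sink (i : Fin k)
deriving DecidableEq

/-- Edges of the flower arena. -/
def flowerE {k : ℕ} : Flower k → Flower k → Prop
  | .heart, .petal _ => True
  | .petal i, .back j => i = j
  | .petal i, .sink j => i = j
  | .back _, .heart => True
  | .sink i, .sink j => i = j
  | _, _ => False

/-- The flower arena: Adam owns the heart, Eve owns the petals. -/
def flowerArena (k : ℕ) (hk : 0 < k) : Arena (Flower k) where
  E := flowerE
  eve := fun v => ∃ i, v = Flower.petal i
  succ_exists := fun v => by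
    cases v with
    | heart => exact ⟨Flower.petal ⟨0, hk⟩, trivial⟩
    | petal i => exact ⟨Flower.back i, rfl⟩
    | back i => exact ⟨Flower.heart, trivial⟩
    | sink i => exact ⟨Flower.sink i, rfl⟩

/-- The reachability sets of the flower game: `b_i` has color `i` only, and the sink
`c_j` has every color except `j`. -/
def flowerF (k : ℕ) : Fin k → Set (Flower k) :=
  fun i => {v | v = Flower.back i ∨ ∃ j, j ≠ i ∧ v = Flower.sink j}

section FlowerAux

variable {k : ℕ} {M : Type}

/-- The stopping set of a memory state `m`: the petals from which Eve (with memory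
updated after Adam's move from the heart) goes to the sink. -/
def stopSet (μ : MemStruct (Flower k) M) (ν : Flower k → M → Flower k) (m : M) :
    Finset (Fin k) :=
  Finset.univ.filter (fun i => ν (.petal i) (μ.upd m .heart (.petal i)) = .sink i)

lemma mem_stopSet {μ : MemStruct (Flower k) M} {ν : Flower k → M → Flower k}
    {m : M} {i : Fin k} :
    i ∈ stopSet μ ν m ↔ ν (.petal i) (μ.upd m .heart (.petal i)) = .sink i := by
  simp [stopSet]

/-- One step of the play: Adam plays `pick m` at the heart; Eve plays `ν` at petals;
the back vertices return to the heart and the sinks loop. -/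
def fstep (μ : MemStruct (Flower k) M) (ν : Flower k → M → Flower k)
    (pick : M → Fin k) : Flower k × M → Flower k × M
  | (.heart, m) => (.petal (pick m), μ.upd m .heart (.petal (pick m)))
  | (.petal i, m) => (ν (.petal i) m, μ.upd m (.petal i) (ν (.petal i) m))
  | (.back i, m) => (.heart, μ.upd m (.back i) .heart)
  | (.sink i, m) => (.sink i, μ.upd m (.sink i) (.sink i))

/-- The play (together with its memory trace). -/
def fseq (μ : MemStruct (Flower k) M) (ν : Flower k → M → Flower k)
    (pick : M → Fin k) : ℕ → Flower k × M
  | 0 => (.heart, μ.m0)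
  | n + 1 => fstep μ ν pick (fseq μ ν pick n)

lemma fstep_snd (μ : MemStruct (Flower k) M) (ν : Flower k → M → Flower k)
    (pick : M → Fin k) (p : Flower k × M) :
    (fstep μ ν pick p).2 = μ.upd p.2 p.1 (fstep μ ν pick p).1 := by
  obtain ⟨v, m⟩ := p; cases v <;> rfl

lemma memTrace_fseq (μ : MemStruct (Flower k) M) (ν : Flower k → M → Flower k)
    (pick : M → Fin k) (n : ℕ) :
    memTrace μ (fun n => (fseq μ ν pick n).1) n = (fseq μ ν pick n).2 := by
  induction n with
  | zero => rfl
  | succ n ih =>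
      show μ.upd _ _ _ = _
      rw [ih]
      exact (fstep_snd μ ν pick (fseq μ ν pick n)).symm

lemma flowerE_petal {i : Fin k} {w : Flower k} (h : flowerE (.petal i) w) :
    w = .back i ∨ w = .sink i := by
  cases w with
  | heart => exact absurd h (by simp [flowerE])
  | petal j => exact absurd h (by simp [flowerE])
  | back j => exact Or.inl (by have : i = j := h; rw [this])
  | sink j => exact Or.inr (by have : i = j := h; rw [this])

lemma fseq_petal {μ : MemStruct (Flower k) M} {ν : Flower k → M → Flower k}
    {pick : M → Fin k} (hleg : ∀ v m, flowerE v (ν v m)) {n : ℕ} {i : Fin k}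
    (h : (fseq μ ν pick (n + 1)).1 = .petal i) :
    (fseq μ ν pick n).1 = .heart ∧ i = pick (fseq μ ν pick n).2 ∧
      (fseq μ ν pick (n + 1)).2 = μ.upd (fseq μ ν pick n).2 .heart (.petal i) := by
  rcases hv : fseq μ ν pick n with ⟨v, m⟩
  have hstep : fseq μ ν pick (n + 1) = fstep μ ν pick (v, m) := by
    show fstep μ ν pick _ = _; rw [hv]
  cases v with
  | heart =>
      rw [hstep] at h
      have hi : pick m = i := Flower.petal.inj h
      refine ⟨rfl, hi.symm, ?_⟩
      rw [hstep]
      show μ.upd m .heart (.petal (pick m)) = _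
      rw [hi]
  | petal j =>
      rw [hstep] at h
      rcases flowerE_petal (hleg (.petal j) m) with hb | hb <;>
        · rw [show (fstep μ ν pick (.petal j, m)).1 = ν (.petal j) m from rfl, hb] at h
          exact absurd h (by simp)
  | back j => exact absurd (hstep ▸ h) (by simp [fstep])
  | sink j => exact absurd (hstep ▸ h) (by simp [fstep])

lemma fseq_back {μ : MemStruct (Flower k) M} {ν : Flower k → M → Flower k}
    {pick : M → Fin k} (hleg : ∀ v m, flowerE v (ν v m)) {n : ℕ} {i : Fin k}
    (h : (fseq μ ν pick (n + 1)).1 = .back i) :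
    (fseq μ ν pick n).1 = .petal i ∧ ν (.petal i) (fseq μ ν pick n).2 = .back i := by
  rcases hv : fseq μ ν pick n with ⟨v, m⟩
  have hstep : fseq μ ν pick (n + 1) = fstep μ ν pick (v, m) := by
    show fstep μ ν pick _ = _; rw [hv]
  cases v with
  | heart => exact absurd (hstep ▸ h) (by simp [fstep])
  | petal j =>
      rw [hstep] at h
      have h' : ν (.petal j) m = .back i := h
      have hj : j = i := by
        rcases flowerE_petal (hleg (.petal j) m) with hb | hb
        · rw [hb] at h'; exact Flower.back.inj h'
        · rw [hb] at h'; exact absurd h' (by simp)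
      subst hj
      exact ⟨rfl, h'⟩
  | back j => exact absurd (hstep ▸ h) (by simp [fstep])
  | sink j => exact absurd (hstep ▸ h) (by simp [fstep])

lemma fseq_sink {μ : MemStruct (Flower k) M} {ν : Flower k → M → Flower k}
    {pick : M → Fin k} (hleg : ∀ v m, flowerE v (ν v m)) {n : ℕ} {i : Fin k}
    (h : (fseq μ ν pick (n + 1)).1 = .sink i) :
    (fseq μ ν pick n).1 = .sink i ∨
      ((fseq μ ν pick n).1 = .petal i ∧ ν (.petal i) (fseq μ ν pick n).2 = .sink i) := by
  rcases hv : fseq μ ν pick n with ⟨v, m⟩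
  have hstep : fseq μ ν pick (n + 1) = fstep μ ν pick (v, m) := by
    show fstep μ ν pick _ = _; rw [hv]
  cases v with
  | heart => exact absurd (hstep ▸ h) (by simp [fstep])
  | petal j =>
      rw [hstep] at h
      have h' : ν (.petal j) m = .sink i := h
      have hj : j = i := by
        rcases flowerE_petal (hleg (.petal j) m) with hb | hb
        · rw [hb] at h'; exact absurd h' (by simp)
        · rw [hb] at h'; exact Flower.sink.inj h'
      subst hj
      exact Or.inr ⟨rfl, h'⟩
  | back j => exact absurd (hstep ▸ h) (by simp [fstep])
  | sink j =>
      rw [hstep] at h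
      have hj : j = i := Flower.sink.inj h
      subst hj
      exact Or.inl rfl

lemma fseq_sink_stay {μ : MemStruct (Flower k) M} {ν : Flower k → M → Flower k}
    {pick : M → Fin k} {n : ℕ} {i : Fin k}
    (h : (fseq μ ν pick n).1 = .sink i) (m : ℕ) :
    (fseq μ ν pick (n + m)).1 = .sink i := by
  induction m with
  | zero => exact h
  | succ m ih =>
      have heq : fseq μ ν pick (n + m) = (.sink i, (fseq μ ν pick (n + m)).2) := by
        rw [← ih]
      show (fstep μ ν pick (fseq μ ν pick (n + m))).1 = _
      rw [heq]
      rfl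

/-- Existence of a proper subset of petals that is not the stopping set of any
memory state, when there are fewer than `2^k - 1` memory states. -/
lemma exists_unused [Fintype M] (hM : Fintype.card M < 2 ^ k - 1)
    (μ : MemStruct (Flower k) M) (ν : Flower k → M → Flower k) :
    ∃ X : Finset (Fin k), X ≠ Finset.univ ∧ ∀ m : M, stopSet μ ν m ≠ X := by
  classical
  by_contra hcon
  push_neg at hcon
  have hsub : (Finset.univ : Finset (Finset (Fin k))).erase Finset.univ ⊆
      Finset.univ.image (stopSet μ ν) := by
    intro X hX
    obtain ⟨m, hm⟩ := hcon X (Finset.ne_of_mem_erase hX)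
    exact Finset.mem_image.2 ⟨m, Finset.mem_univ m, hm⟩
  have hcard := Finset.card_le_card hsub
  rw [Finset.card_erase_of_mem (Finset.mem_univ _), Finset.card_univ,
    Fintype.card_finset, Fintype.card_fin] at hcard
  have : 2 ^ k - 1 ≤ Fintype.card M :=
    le_trans hcard (le_trans (Finset.card_image_le) (by simp))
  omega

end FlowerAux

/-- in the flower game with `k` petals, against any strategy of Eve with
fewer than `2^k - 1` memory states, Adam has a counter-strategy: there is a consistent
play violating the generalized reachability objective. -/
theorem flower_memory_lower_bound (k : ℕ) (hk : 0 < k)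
    (M : Type) (inst : Fintype M) (hM : @Fintype.card M inst < 2 ^ k - 1)
    (μ : MemStruct (Flower k) M) (ν : Flower k → M → Flower k)
    (hleg : MemLegal (flowerArena k hk) ν) :
    ∃ π, IsPlay (flowerArena k hk) Flower.heart π ∧
      MemConsistentEve (flowerArena k hk) μ ν π ∧ ¬ GenReach (flowerF k) π := by
  classical
  letI := inst
  have hleg' : ∀ v m, flowerE v (ν v m) := hleg
  -- choose a proper subset X that is not any stopping set
  obtain ⟨X, hXuniv, hX⟩ := exists_unused hM μ ν
  -- choose Adam's picks in the symmetric difference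
  have hne : ∀ m : M, ∃ i : Fin k, (i ∈ stopSet μ ν m ↔ i ∉ X) := by
    intro m
    have h := hX m
    rw [Ne, Finset.ext_iff, not_forall] at h
    obtain ⟨i, hi⟩ := h
    exact ⟨i, by tauto⟩
  choose pick hpick using hne
  set π : ℕ → Flower k := fun n => (fseq μ ν pick n).1 with hπ
  -- petals chosen by Adam that Eve answers with `back` are in X; with `sink`, not in X
  have hkey : ∀ (n : ℕ) (i : Fin k), (fseq μ ν pick (n + 1)).1 = .petal i →
      (i ∈ stopSet μ ν (fseq μ ν pick n).2 ↔ i ∉ X) ∧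
      (i ∈ stopSet μ ν (fseq μ ν pick n).2 ↔
        ν (.petal i) (fseq μ ν pick (n + 1)).2 = .sink i) := by
    intro n i h
    obtain ⟨h1, h2, h3⟩ := fseq_petal hleg' h
    constructor
    · rw [h2]; exact hpick _
    · rw [mem_stopSet, h3]
  have hback : ∀ (n : ℕ) (i : Fin k), (fseq μ ν pick n).1 = .back i → i ∈ X := by
    intro n i h
    match n with
    | 0 => exact absurd h (by simp [fseq])
    | 1 =>
        obtain ⟨h1, _⟩ := fseq_back hleg' h
        exact absurd h1 (by simp [fseq])
    | (n + 2) =>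
        obtain ⟨h1, h2⟩ := fseq_back hleg' h
        obtain ⟨hiff1, hiff2⟩ := hkey n i h1
        have : i ∉ stopSet μ ν (fseq μ ν pick n).2 := by
          rw [hiff2, h2]
          simp
        rw [hiff1] at this
        exact not_not.mp this
  have hsink : ∀ (n : ℕ) (i : Fin k), (fseq μ ν pick (n + 1)).1 = .sink i →
      (fseq μ ν pick n).1 ≠ .sink i → i ∉ X := by
    intro n i h hprev
    rcases fseq_sink hleg' h with h' | ⟨h1, h2⟩
    · exact absurd h' hprev
    · match n with
      | 0 => exact absurd h1 (by simp [fseq])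
      | (n + 1) =>
          obtain ⟨hiff1, hiff2⟩ := hkey n i h1
          rw [← hiff1, hiff2]
          exact h2
  refine ⟨π, ⟨rfl, ?_⟩, ?_, ?_⟩
  · -- it is a play
    intro n
    rcases hv : fseq μ ν pick n with ⟨v, m⟩
    have h1 : π n = v := by rw [hπ]; simp only; rw [hv]
    have h2 : π (n + 1) = (fstep μ ν pick (v, m)).1 := by
      rw [hπ]; simp only
      show (fstep μ ν pick _).1 = _; rw [hv]
    rw [h1, h2]
    show flowerE v (fstep μ ν pick (v, m)).1
    cases v with
    | heart => exact trivial
    | petal i => exact hleg' (.petal i) m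
    | back i => exact trivial
    | sink i => exact rfl
  · -- consistency with Eve's strategy
    intro n heve
    obtain ⟨i, hi⟩ := heve
    rcases hv : fseq μ ν pick n with ⟨v, m⟩
    have h1 : π n = v := by rw [hπ]; simp only; rw [hv]
    rw [h1] at hi
    subst hi
    have h2 : π (n + 1) = ν (.petal i) m := by
      rw [hπ]; simp only
      show (fstep μ ν pick _).1 = _; rw [hv]; rfl
    rw [h2, h1, memTrace_fseq, hv]
  · -- the play does not satisfy GenReach
    intro hGR
    by_cases hs : ∃ n i, π n = Flower.sink i
    · -- a sink is reached; let n0 be the first time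
      obtain ⟨i, hi⟩ := Nat.find_spec hs
      have hmin : ∀ m, (∃ j, π m = Flower.sink j) → Nat.find hs ≤ m :=
        fun m hm => Nat.find_min' hs hm
      obtain ⟨n0, hn0⟩ : ∃ n0, Nat.find hs = n0 := ⟨_, rfl⟩
      rw [hn0] at hi hmin
      -- i is not in X
      have hiX : i ∉ X := by
        match n0, hi, hmin with
        | 0, hi, _ => exact absurd hi (by simp [π, fseq])
        | (n + 1), hi, hmin =>
            refine hsink n i hi ?_
            intro hcon
            have := hmin n ⟨i, hcon⟩
            omega
      -- yet F i must be visited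
      obtain ⟨m, hm⟩ := hGR i
      rcases hm with hb | ⟨j, hji, hsj⟩
      · exact hiX (hback m i hb)
      · -- π m = sink j with j ≠ i; but the only sink reached is sink i
        have hmn0 : n0 ≤ m := hmin m ⟨j, hsj⟩
        have : π m = Flower.sink i := by
          obtain ⟨d, hd⟩ := Nat.exists_eq_add_of_le hmn0
          rw [hd]
          exact fseq_sink_stay hi d
        rw [this] at hsj
        exact hji (Flower.sink.inj hsj.symm) 
    · -- no sink is ever reached
      push_neg at hs
      obtain ⟨j, hj⟩ : ∃ j : Fin k, j ∉ X := by
        by_contra hcon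
        push_neg at hcon
        exact hXuniv (Finset.eq_univ_iff_forall.2 hcon)
      obtain ⟨m, hm⟩ := hGR j
      rcases hm with hb | ⟨l, _, hsl⟩
      · exact hj (hback m j hb)
      · exact hs m l hsl
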